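/- arXiv:1906.06802 — 3 statements merged into one kernel-verified Lean document; each statement's English description precedes it below -/
import Mathlib

section
/- Let λ ∈ ℂ \ {0}, f_λ(z) = λ·tan z, and let W ⊆ ℂ be a nonempty connected open set with cos z ≠ 0 for all z ∈ W. If the closure of f_λ(W) in ℂ is disjoint from {iλ, −iλ}, then there exists R > 0 such that W ⊆ {z ∈ ℂ : |Im z| < R}. -/
open Complex Filter Topology Bornology

/-! As `Im z → ±∞` we have `tan z → ±i`, uniformly in `Re z`, because `exp (2iz)` tends to `0`
(resp. `∞`). So if `W` reached arbitrarily high (or low), `f_λ(W)` would accumulate at `iλ`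
(or `-iλ`). -/

theorem Complex.tendsto_exp_two_I_mul_comap_im_atTop :
    Tendsto (fun z : ℂ => exp (2 * I * z)) (comap im atTop) (𝓝 0) := by
  refine tendsto_exp_comap_re_atBot.comp (tendsto_comap_iff.mpr ?_)
  have hre : re ∘ (fun z : ℂ => 2 * I * z) = fun z => -(2 * z.im) := by
    ext z; simp
  rw [hre]
  exact tendsto_neg_atTop_atBot.comp (tendsto_comap.const_mul_atTop two_pos)

theorem Complex.tendsto_cot_comap_im_atTop : Tendsto cot (comap im atTop) (𝓝 (-I)) := by
  have hrat : Tendsto (fun w : ℂ => (w + 1) / (I * (1 - w))) (𝓝 0) (𝓝 (-I)) := by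
    have hcont : ContinuousAt (fun w : ℂ => (w + 1) / (I * (1 - w))) 0 := by
      refine (continuousAt_id.add continuousAt_const).div
        (continuousAt_const.mul (continuousAt_const.sub continuousAt_id)) ?_
      simp
    simpa [div_I] using hcont.tendsto
  simpa only [Function.comp_def, ← cot_eq_exp_ratio] using
    hrat.comp tendsto_exp_two_I_mul_comap_im_atTop

theorem Complex.tendsto_tan_comap_im_atTop : Tendsto tan (comap im atTop) (𝓝 I) := by
  simpa only [cot_inv_eq_tan, inv_neg, inv_I, neg_neg] using
    tendsto_cot_comap_im_atTop.inv₀ (neg_ne_zero.mpr I_ne_zero)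

theorem Complex.tendsto_tan_comap_im_atBot : Tendsto tan (comap im atBot) (𝓝 (-I)) := by
  have hneg : Tendsto Neg.neg (comap im atBot) (comap im atTop) := by
    simpa only [tendsto_comap_iff, Function.comp_def, neg_im] using
      tendsto_neg_atBot_atTop.comp tendsto_comap
  simpa only [Function.comp_def, tan_neg, neg_neg] using
    (tendsto_tan_comap_im_atTop.comp hneg).neg

theorem bddAbove_image_of_tendsto_comap_atTop_of_notMem_closure {α β X : Type*}
    [LinearOrder β] [Nonempty β] [TopologicalSpace X] {f : α → X} {g : α → β} {s : Set α} {y : X}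
    (hf : Tendsto f (comap g atTop) (𝓝 y)) (hy : y ∉ closure (f '' s)) :
    BddAbove (g '' s) := by
  obtain ⟨U, hU, hUs⟩ : ∃ U ∈ 𝓝 y, Disjoint U (f '' s) := by
    simpa [mem_closure_iff_nhds, Set.not_nonempty_iff_eq_empty, Set.disjoint_iff_inter_eq_empty]
      using hy
  obtain ⟨a, ha⟩ := (atTop_basis.comap g).mem_iff.mp (hf hU)
  refine ⟨a, Set.forall_mem_image.mpr fun x hx => le_of_not_ge fun hax => ?_⟩
  exact hUs.ne_of_mem (ha.2 hax) (Set.mem_image_of_mem f hx) rfl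

theorem bddBelow_image_of_tendsto_comap_atBot_of_notMem_closure {α β X : Type*}
    [LinearOrder β] [Nonempty β] [TopologicalSpace X] {f : α → X} {g : α → β} {s : Set α}
    {y : X} (hf : Tendsto f (comap g atBot) (𝓝 y)) (hy : y ∉ closure (f '' s)) :
    BddBelow (g '' s) :=
  bddAbove_image_of_tendsto_comap_atTop_of_notMem_closure (β := βᵒᵈ) hf hy

theorem contained_in_strip_of_closure_image_avoids_asymptotic_values_general
    (lam : ℂ) (f : ℂ → ℂ) (hf : ∀ z, f z = lam * Complex.tan z)
    (W : Set ℂ)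
    (havoid : closure (f '' W) ∩ {Complex.I * lam, -(Complex.I * lam)} = ∅) :
    ∃ R > 0, W ⊆ {z : ℂ | |z.im| < R} := by
  have hf' : f = fun z => lam * tan z := funext hf
  have hup : BddAbove (im '' W) := by
    refine bddAbove_image_of_tendsto_comap_atTop_of_notMem_closure (y := I * lam) ?_
      fun h => havoid.subset ⟨h, by simp⟩
    simpa only [hf', mul_comm lam] using tendsto_tan_comap_im_atTop.const_mul lam
  have hdown : BddBelow (im '' W) := by
    refine bddBelow_image_of_tendsto_comap_atBot_of_notMem_closure (y := -(I * lam)) ?_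
      fun h => havoid.subset ⟨h, by simp⟩
    simpa only [hf', mul_neg, neg_mul, mul_comm lam] using
      tendsto_tan_comap_im_atBot.const_mul lam
  obtain ⟨R, hR, hlt⟩ := (isBounded_iff_bddBelow_bddAbove.mpr ⟨hdown, hup⟩).exists_pos_norm_lt
  exact ⟨R, hR, fun z hz => hlt _ (Set.mem_image_of_mem _ hz)⟩

/-- **Proposition 2.1.** Let `λ ≠ 0` and `f_λ z = λ ⬝ tan z`. If `W` is a nonempty
connected open set avoiding the poles of `tan`, and the closure of `f_λ(W)` in `ℂ`
is disjoint from the asymptotic values `{iλ, −iλ}`, then `W` lies in a horizontal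
strip `{|Im z| < R}`. -/
theorem contained_in_strip_of_closure_image_avoids_asymptotic_values
    (lam : ℂ) (hlam : lam ≠ 0) (f : ℂ → ℂ) (hf : ∀ z, f z = lam * Complex.tan z)
    (W : Set ℂ) (hne : W.Nonempty) (hopen : IsOpen W) (hconn : IsConnected W)
    (hpoles : ∀ z ∈ W, Complex.cos z ≠ 0)
    (havoid : closure (f '' W) ∩ {Complex.I * lam, -(Complex.I * lam)} = ∅) :
    ∃ R > 0, W ⊆ {z : ℂ | |z.im| < R} :=
  contained_in_strip_of_closure_image_avoids_asymptotic_values_general lam f hf W havoid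
end

section
/- Let λ ∈ ℂ \ {0}. The map z ↦ λ·tan z, restricted to the domain {z ∈ ℂ : cos z ≠ 0} and viewed as a map onto ℂ \ {iλ, −iλ}, is a covering map: every point of ℂ \ {iλ, −iλ} has an open neighborhood that is evenly covered by this map. -/
/-! The map factors as `λ tan z = μ (exp (2 i z))` with `μ w = i λ (1 - w) / (1 + w)`.
Since `exp (2 i z) + 1 = 2 cos z · exp (i z)`, the set `{cos z ≠ 0}` is the preimage of
`ℂ \ {0, -1}` under the covering map `z ↦ exp (2 i z)` of `ℂ \ {0}`, and the Möbius map `μ`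
(sending `0 ↦ i λ`, `∞ ↦ -i λ`, `-1 ↦ ∞`) is a homeomorphism of `ℂ \ {0, -1}` onto
`ℂ \ {i λ, -i λ}`. Restricting a covering map to a preimage and composing it with
homeomorphisms gives again a covering map. -/

open Complex

lemma tan_ne_I_of_cos_ne_zero {z : ℂ} (hz : Complex.cos z ≠ 0) :
    Complex.tan z ≠ Complex.I := by
  intro h
  have hs : Complex.sin z = Complex.I * Complex.cos z := by
    rw [Complex.tan_eq_sin_div_cos, div_eq_iff hz] at h
    exact h
  have h1 := Complex.sin_sq_add_cos_sq z
  rw [hs] at h1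
  have h2 : (Complex.I * Complex.cos z) ^ 2 + Complex.cos z ^ 2 = 0 := by
    rw [mul_pow, Complex.I_sq]; ring
  rw [h2] at h1
  exact one_ne_zero h1.symm

lemma tan_ne_neg_I_of_cos_ne_zero {z : ℂ} (hz : Complex.cos z ≠ 0) :
    Complex.tan z ≠ -Complex.I := by
  intro h
  have hs : Complex.sin z = -Complex.I * Complex.cos z := by
    rw [Complex.tan_eq_sin_div_cos, div_eq_iff hz] at h
    exact h
  have h1 := Complex.sin_sq_add_cos_sq z
  rw [hs] at h1
  have h2 : (-Complex.I * Complex.cos z) ^ 2 + Complex.cos z ^ 2 = 0 := by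
    rw [mul_pow, neg_sq, Complex.I_sq]; ring
  rw [h2] at h1
  exact one_ne_zero h1.symm

lemma lam_tan_ne_I_lam {lam z : ℂ} (hlam : lam ≠ 0) (hz : Complex.cos z ≠ 0) :
    lam * Complex.tan z ≠ Complex.I * lam := by
  intro h
  apply tan_ne_I_of_cos_ne_zero hz
  have : lam * Complex.tan z = lam * Complex.I := by rw [h]; ring
  exact mul_left_cancel₀ hlam this

lemma lam_tan_ne_neg_I_lam {lam z : ℂ} (hlam : lam ≠ 0) (hz : Complex.cos z ≠ 0) :
    lam * Complex.tan z ≠ -(Complex.I * lam) := by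
  intro h
  apply tan_ne_neg_I_of_cos_ne_zero hz
  have : lam * Complex.tan z = lam * -Complex.I := by rw [h]; ring
  exact mul_left_cancel₀ hlam this

section Mobius

variable {𝕜 : Type*} [Field 𝕜]

theorem mul_one_sub_div_one_add_eq_iff {a w v : 𝕜} (hw : 1 + w ≠ 0) :
    a * (1 - w) / (1 + w) = v ↔ w * (a + v) = a - v := by
  rw [div_eq_iff hw]
  constructor <;> intro h <;> linear_combination -h

theorem sub_div_add_eq_iff {a w v : 𝕜} (hv : a + v ≠ 0) :
    (a - v) / (a + v) = w ↔ w * (a + v) = a - v := by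
  rw [div_eq_iff hv, eq_comm]

variable [NeZero (2 : 𝕜)] [TopologicalSpace 𝕜] [IsTopologicalDivisionRing 𝕜]

noncomputable def mobiusHomeomorph (a : 𝕜) (ha : a ≠ 0) :
    {w : 𝕜 // w ≠ 0 ∧ w ≠ -1} ≃ₜ {v : 𝕜 // v ≠ a ∧ v ≠ -a} :=
  have hw (w : {w : 𝕜 // w ≠ 0 ∧ w ≠ -1}) : 1 + (w : 𝕜) ≠ 0 :=
    fun h ↦ w.2.2 (by linear_combination h)
  have hv (v : {v : 𝕜 // v ≠ a ∧ v ≠ -a}) : a + (v : 𝕜) ≠ 0 :=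
    fun h ↦ v.2.2 (by linear_combination h)
  have h2a : 2 * a ≠ 0 := mul_ne_zero two_ne_zero ha
  { toFun w := ⟨a * (1 - w) / (1 + w), by
      constructor <;> intro h <;> have hrel := (mul_one_sub_div_one_add_eq_iff (hw w)).1 h
      · exact w.2.1 <| (mul_eq_zero_iff_right h2a).1 (by linear_combination hrel)
      · exact h2a (by linear_combination -hrel)⟩
    invFun v := ⟨(a - v) / (a + v), by
      constructor <;> intro h <;> have hrel := (sub_div_add_eq_iff (hv v)).1 h
      · exact v.2.1 (by linear_combination hrel)
      · exact h2a (by linear_combination -hrel)⟩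
    left_inv w := Subtype.ext <| (sub_div_add_eq_iff (hv _)).2 <|
      (mul_one_sub_div_one_add_eq_iff (hw w)).1 rfl
    right_inv v := Subtype.ext <| (mul_one_sub_div_one_add_eq_iff (hw _)).2 <|
      (sub_div_add_eq_iff (hv v)).1 rfl
    continuous_toFun := by fun_prop (disch := exact hw)
    continuous_invFun := by fun_prop (disch := exact hv) }

end Mobius

namespace Complex

theorem isCoveringMapOn_exp_const_mul {c : ℂ} (hc : c ≠ 0) :
    IsCoveringMapOn (fun z ↦ exp (c * z)) {0}ᶜ :=
  isCoveringMapOn_exp.comp_homeomorph (Homeomorph.mulLeft₀ c hc)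

theorem exp_two_mul_I_mul (z : ℂ) : exp (2 * I * z) = exp (z * I) * exp (z * I) := by
  rw [← exp_add]; ring_nf

theorem exp_neg_mul_I_mul_exp_mul_I (z : ℂ) : exp (-z * I) * exp (z * I) = 1 := by
  rw [← exp_add, neg_mul, neg_add_cancel, exp_zero]

theorem one_add_exp_two_mul_I_mul (z : ℂ) : 1 + exp (2 * I * z) = 2 * cos z * exp (z * I) := by
  linear_combination exp_two_mul_I_mul z - exp_neg_mul_I_mul_exp_mul_I z - exp (z * I) * two_cos z

theorem one_sub_exp_two_mul_I_mul (z : ℂ) :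
    1 - exp (2 * I * z) = -I * (2 * sin z) * exp (z * I) := by
  linear_combination -exp_two_mul_I_mul z - exp_neg_mul_I_mul_exp_mul_I z +
    I * exp (z * I) * two_sin z + (exp (-z * I) - exp (z * I)) * exp (z * I) * I_sq

theorem cos_ne_zero_iff_exp_two_mul_I_mul_ne_neg_one {z : ℂ} :
    cos z ≠ 0 ↔ exp (2 * I * z) ≠ -1 := by
  rw [ne_eq, ne_eq, not_iff_not, eq_neg_iff_add_eq_zero, add_comm, one_add_exp_two_mul_I_mul]
  simp [exp_ne_zero]

theorem tan_eq_I_mul_one_sub_exp_div_one_add_exp (z : ℂ) :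
    tan z = I * (1 - exp (2 * I * z)) / (1 + exp (2 * I * z)) := by
  rw [one_add_exp_two_mul_I_mul, one_sub_exp_two_mul_I_mul, ← mul_assoc, ← mul_assoc, mul_neg,
    I_mul_I, neg_neg, one_mul, mul_div_mul_right _ _ (exp_ne_zero _),
    mul_div_mul_left _ _ two_ne_zero, tan_eq_sin_div_cos]

end Complex

/-- **Covering property of the tangent family.** For `λ ≠ 0`, the map
`z ↦ λ ⬝ tan z`, restricted to `{z : cos z ≠ 0}` and viewed as a map onto
`ℂ \ {iλ, −iλ}`, is a covering map. -/
theorem tangent_family_isCoveringMap (lam : ℂ) (hlam : lam ≠ 0) :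
    IsCoveringMap (fun z : {z : ℂ // Complex.cos z ≠ 0} =>
      (⟨lam * Complex.tan z.1,
        lam_tan_ne_I_lam hlam z.2, lam_tan_ne_neg_I_lam hlam z.2⟩ :
        {w : ℂ // w ≠ Complex.I * lam ∧ w ≠ -(Complex.I * lam)})) := by
  have hexp : IsCoveringMapOn (fun z ↦ exp (2 * I * z)) {w | w ≠ 0 ∧ w ≠ -1} :=
    (isCoveringMapOn_exp_const_mul (by simp)).mono fun w hw ↦ hw.1
  have hpre :
      {z | cos z ≠ 0} = (fun z ↦ exp (2 * I * z)) ⁻¹' {w | w ≠ 0 ∧ w ≠ -1} := by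
    ext z
    simp [cos_ne_zero_iff_exp_two_mul_I_mul_ne_neg_one, exp_ne_zero]
  convert (hexp.isCoveringMap_restrictPreimage.homeomorph_comp
    (mobiusHomeomorph (I * lam) (by simp [hlam]))).comp_homeomorph
    (Homeomorph.setCongr hpre) using 1
  · rfl
  funext z
  refine Subtype.ext ?_
  change lam * tan z.1 = I * lam * (1 - exp (2 * I * z.1)) / (1 + exp (2 * I * z.1))
  rw [tan_eq_I_mul_one_sub_exp_div_one_add_exp]
  ring
end

section
/- Let λ ∈ ℂ \ {0}, f_λ(z) = λ·tan z, and let Ω ⊆ ℂ be a bounded open set with cos z ≠ 0 for all z ∈ Ω. Then neither iλ nor −iλ belongs to the frontier (topological boundary in ℂ) of the image f_λ(Ω). -/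
/-!
On `cos z ≠ 0` one has `(tan z - i) · (i cos z · e^{-iz}) = 1` and `(tan z + i) · (-i cos z · e^{iz}) = 1`
with entire cofactors. An entire function is bounded on a bounded set, so `tan z ∓ i` stays bounded
away from `0` there, and `±iλ` cannot be a limit of values `λ tan z`.
-/

open Complex Bornology

theorem notMem_closure_image_of_sub_mul_eq_one {X 𝕜 : Type*} [PseudoMetricSpace X] [ProperSpace X]
    [NormedField 𝕜] {h g : X → 𝕜} {s : Set X} {c : 𝕜} (hg : Continuous g) (hs : IsBounded s)
    (hhg : ∀ x ∈ s, (h x - c) * g x = 1) : c ∉ closure (h '' s) := by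
  obtain ⟨C, hC_pos, hC⟩ := (hs.isCompact_closure.image hg).isBounded.exists_pos_norm_le
  rw [Metric.mem_closure_iff]
  push Not
  refine ⟨C⁻¹, inv_pos.2 hC_pos, ?_⟩
  rintro _ ⟨x, hx, rfl⟩
  have one_le : 1 ≤ ‖h x - c‖ * C := calc
    (1 : ℝ) = ‖h x - c‖ * ‖g x‖ := by rw [← norm_mul, hhg x hx, norm_one]
    _ ≤ ‖h x - c‖ * C := by gcongr; exact hC _ ⟨x, subset_closure hx, rfl⟩
  rwa [dist_comm, dist_eq_norm, inv_le_iff_one_le_mul₀ hC_pos]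

theorem tan_sub_I_mul_eq_one {z : ℂ} (hz : cos z ≠ 0) :
    (tan z - I) * (I * cos z * exp (-z * I)) = 1 := by
  rw [tan_eq_sin_div_cos, ← cos_sub_sin_I]
  field_simp
  linear_combination sin_sq_add_cos_sq z + (I * sin z * cos z - sin z ^ 2 - cos z ^ 2) * I_sq

theorem tan_add_I_mul_eq_one {z : ℂ} (hz : cos z ≠ 0) :
    (tan z + I) * (-I * cos z * exp (z * I)) = 1 := by
  rw [tan_eq_sin_div_cos, ← cos_add_sin_I]
  field_simp
  linear_combination sin_sq_add_cos_sq z - (sin z ^ 2 + cos z ^ 2 + I * sin z * cos z) * I_sq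

theorem asymptotic_values_not_on_boundary_of_bounded_image_general
    (lam : ℂ) (hlam : lam ≠ 0) (f : ℂ → ℂ) (hf : ∀ z, f z = lam * Complex.tan z)
    (Ω : Set ℂ) (hbdd : IsBounded Ω)
    (hpoles : ∀ z ∈ Ω, Complex.cos z ≠ 0) :
    Complex.I * lam ∉ frontier (f '' Ω) ∧ -(Complex.I * lam) ∉ frontier (f '' Ω) := by
  constructor <;> intro hmem
  · refine notMem_closure_image_of_sub_mul_eq_one (g := fun z ↦ I * cos z * exp (-z * I) / lam)
      (by fun_prop) hbdd (fun z hz ↦ ?_) (frontier_subset_closure hmem)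
    rw [hf, ← tan_sub_I_mul_eq_one (hpoles z hz)]
    field_simp
  · refine notMem_closure_image_of_sub_mul_eq_one (g := fun z ↦ -I * cos z * exp (z * I) / lam)
      (by fun_prop) hbdd (fun z hz ↦ ?_) (frontier_subset_closure hmem)
    rw [hf, ← tan_add_I_mul_eq_one (hpoles z hz)]
    field_simp
    ring

/-- **Easy direction of Theorem 1.1.** Let `λ ≠ 0` and `f_λ z = λ ⬝ tan z`.
If `Ω ⊆ ℂ` is a bounded open set avoiding the poles of `tan`, then neither of
the asymptotic values `iλ`, `−iλ` lies on the frontier of `f_λ(Ω)`. -/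
theorem asymptotic_values_not_on_boundary_of_bounded_image
    (lam : ℂ) (hlam : lam ≠ 0) (f : ℂ → ℂ) (hf : ∀ z, f z = lam * Complex.tan z)
    (Ω : Set ℂ) (hopen : IsOpen Ω) (hbdd : IsBounded Ω)
    (hpoles : ∀ z ∈ Ω, Complex.cos z ≠ 0) :
    Complex.I * lam ∉ frontier (f '' Ω) ∧ -(Complex.I * lam) ∉ frontier (f '' Ω) :=
  asymptotic_values_not_on_boundary_of_bounded_image_general lam hlam f hf Ω hbdd hpoles
end
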